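/- arXiv:math/0303123 — 4 statements merged into one kernel-verified Lean document; each statement's English description precedes it below -/
import Mathlib

section
/- Let g = [[A, B], [C, D]] ∈ O(n,n|ℝ) and let θ be an n×n real skew-symmetric matrix such that Cθ + D is invertible. Then (Cθ + D)⁻¹·C is skew-symmetric. -/
/-! Since `J = [[0, I], [I, 0]]` is an involution, `gᵀ J g = J` also gives `g J gᵀ = J`, whose
lower-right block reads `D Cᵀ + C Dᵀ = 0`. As `θ` is skew, `E := Cθ + D` satisfies the same relation
`E Cᵀ = -C Eᵀ`; multiplying by `E⁻¹` on the left and by `Eᵀ⁻¹` on the right gives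
`Cᵀ Eᵀ⁻¹ = -E⁻¹ C`, i.e. `(E⁻¹ C)ᵀ = -E⁻¹ C`. -/

open Matrix

namespace Matrix

variable {n R : Type*} [Fintype n] [CommRing R]

lemma mul_transpose_eq_of_transpose_mul_eq [DecidableEq n] {J g : Matrix n n R} (hJ : J * J = 1)
    (hg : gᵀ * J * g = J) : g * J * gᵀ = J := by
  have hleft : (J * gᵀ * J) * g = 1 :=
    calc (J * gᵀ * J) * g = J * (gᵀ * J * g) := by simp only [Matrix.mul_assoc]
      _ = 1 := by rw [hg, hJ]
  calc g * J * gᵀ = g * (J * gᵀ * J) * J := by simp only [mul_assoc, hJ, mul_one]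
    _ = J := by rw [mul_eq_one_comm.mp hleft, one_mul]

lemma fromBlocks_zero_one_one_zero_mul_self [DecidableEq n] :
    (fromBlocks 0 1 1 0 : Matrix (n ⊕ n) (n ⊕ n) R) * fromBlocks 0 1 1 0 = 1 := by
  simp [fromBlocks_multiply, ← fromBlocks_one]

lemma fromBlocks_mul_fromBlocks_zero_one_one_zero_mul_transpose [DecidableEq n]
    (A B C D : Matrix n n R) :
    fromBlocks A B C D * fromBlocks 0 1 1 0 * (fromBlocks A B C D)ᵀ =
      fromBlocks (B * Aᵀ + A * Bᵀ) (B * Cᵀ + A * Dᵀ) (D * Aᵀ + C * Bᵀ) (D * Cᵀ + C * Dᵀ) := by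
  simp [fromBlocks_transpose, fromBlocks_multiply]

lemma mul_transpose_add_mul_transpose_eq_zero_of_transpose_mul_fromBlocks
    [DecidableEq n] {A B C D : Matrix n n R}
    (hg : (fromBlocks A B C D)ᵀ * fromBlocks 0 1 1 0 * fromBlocks A B C D = fromBlocks 0 1 1 0) :
    D * Cᵀ + C * Dᵀ = 0 := by
  have h := mul_transpose_eq_of_transpose_mul_eq fromBlocks_zero_one_one_zero_mul_self hg
  rw [fromBlocks_mul_fromBlocks_zero_one_one_zero_mul_transpose] at h
  simpa using congrArg toBlocks₂₂ h

lemma add_mul_transpose_add_eq_zero_of_transpose_eq_neg {m : Type*} {C D : Matrix m n R}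
    {θ : Matrix n n R}
    (hθ : θᵀ = -θ) (hCD : D * Cᵀ + C * Dᵀ = 0) :
    (C * θ + D) * Cᵀ + C * (C * θ + D)ᵀ = 0 := by
  rw [transpose_add, transpose_mul, hθ, ← hCD, Matrix.add_mul, Matrix.mul_add, Matrix.neg_mul,
    Matrix.mul_neg, Matrix.mul_assoc]
  abel

lemma transpose_nonsing_inv_mul_eq_neg [DecidableEq n] {E C : Matrix n n R} (hE : IsUnit E)
    (hEC : E * Cᵀ + C * Eᵀ = 0) : (E⁻¹ * C)ᵀ = -(E⁻¹ * C) := by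
  have hdet : IsUnit E.det := (isUnit_iff_isUnit_det E).mp hE
  have hCt : Cᵀ = -(E⁻¹ * C * Eᵀ) := by
    rw [mul_assoc, ← mul_neg, ← eq_neg_of_add_eq_zero_left hEC, ← mul_assoc,
      nonsing_inv_mul E hdet, one_mul]
  rw [transpose_mul, transpose_nonsing_inv, hCt, neg_mul,
    mul_nonsing_inv_cancel_right _ _ (by rwa [det_transpose])]

end Matrix

theorem stmt3 (n : ℕ) (A B C D θ : Matrix (Fin n) (Fin n) ℝ)
    (hg : (Matrix.fromBlocks A B C D)ᵀ * Matrix.fromBlocks 0 1 1 0 * Matrix.fromBlocks A B C D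
      = Matrix.fromBlocks 0 1 1 0)
    (hθ : θᵀ = -θ) (hinv : IsUnit (C * θ + D)) :
    ((C * θ + D)⁻¹ * C)ᵀ = -((C * θ + D)⁻¹ * C) :=
  transpose_nonsing_inv_mul_eq_neg hinv <| add_mul_transpose_add_eq_zero_of_transpose_eq_neg hθ <|
    mul_transpose_add_mul_transpose_eq_zero_of_transpose_mul_fromBlocks hg
end

section
/- Let g = [[A, B], [C, D]] ∈ O(n,n|ℝ) and let θ be an n×n real skew-symmetric matrix such that Cθ + D is invertible. Then the matrix gθ := (Aθ + B)(Cθ + D)⁻¹ is skew-symmetric. -/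
/-!
Pair ℝⁿ ⊕ ℝⁿ with the split form ⟨(x, y), (x', y')⟩ = xᵀy' + yᵀx', whose Gram matrix is
`fromBlocks 0 1 1 0`. The columns of `fromRows θ 1` (the graph of θ) span an isotropic subspace
exactly because θ is skew-symmetric. Since g preserves the form, the columns of
`g * fromRows θ 1 = fromRows (Aθ + B) (Cθ + D)` are isotropic as well, i.e.
`PᵀQ + QᵀP = 0` for `P = Aθ + B`, `Q = Cθ + D`; when `Q` is invertible this says that `PQ⁻¹`
is skew-symmetric.
-/

namespace Matrix

variable {R m n k : Type*}

theorem transpose_fromRows_mul_fromBlocks_mul_fromRows [Semiring R] [Fintype m] [DecidableEq m]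
    (X Y : Matrix m k R) :
    (fromRows X Y)ᵀ * (fromBlocks 0 1 1 0 : Matrix (m ⊕ m) (m ⊕ m) R) * fromRows X Y =
      Xᵀ * Y + Yᵀ * X := by
  rw [transpose_fromRows, fromCols_mul_fromBlocks, fromCols_mul_fromRows]
  simp [add_comm]

theorem transpose_mul_mul_mul_eq_of_transpose_mul_mul_eq [CommSemiring R] [Fintype n]
    {g J : Matrix n n R} (hg : gᵀ * J * g = J) (M : Matrix n k R) :
    (g * M)ᵀ * J * (g * M) = Mᵀ * J * M := by
  conv_rhs => rw [← hg]
  simp only [transpose_mul, Matrix.mul_assoc]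

theorem transpose_mul_nonsing_inv_eq_neg [CommRing R] [Fintype n] [DecidableEq n]
    {P Q : Matrix n n R} (hPQ : Pᵀ * Q + Qᵀ * P = 0) (hQ : IsUnit Q) :
    (P * Q⁻¹)ᵀ = -(P * Q⁻¹) := by
  have hdet : IsUnit Q.det := (isUnit_iff_isUnit_det Q).mp hQ
  have hdetT : IsUnit Qᵀ.det := by rwa [det_transpose]
  have hPQ' : Pᵀ * Q = -(Qᵀ * P) := eq_neg_of_add_eq_zero_left hPQ
  rw [transpose_mul, transpose_nonsing_inv]
  calc (Qᵀ)⁻¹ * Pᵀ = (Qᵀ)⁻¹ * (Pᵀ * Q) * Q⁻¹ := by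
        rw [Matrix.mul_assoc, Matrix.mul_assoc, mul_nonsing_inv _ hdet, Matrix.mul_one]
    _ = -(P * Q⁻¹) := by
        rw [hPQ', Matrix.mul_neg, Matrix.neg_mul, ← Matrix.mul_assoc, nonsing_inv_mul _ hdetT,
          Matrix.one_mul]

end Matrix

open Matrix

theorem stmt4 (n : ℕ) (A B C D θ : Matrix (Fin n) (Fin n) ℝ)
    (hg : (Matrix.fromBlocks A B C D)ᵀ * Matrix.fromBlocks 0 1 1 0 * Matrix.fromBlocks A B C D
      = Matrix.fromBlocks 0 1 1 0)
    (hθ : θᵀ = -θ) (hinv : IsUnit (C * θ + D)) :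
    ((A * θ + B) * (C * θ + D)⁻¹)ᵀ = -((A * θ + B) * (C * θ + D)⁻¹) := by
  have hgraph : fromBlocks A B C D * fromRows θ (1 : Matrix (Fin n) (Fin n) ℝ) =
      fromRows (A * θ + B) (C * θ + D) := by
    rw [fromBlocks_mul_fromRows, Matrix.mul_one, Matrix.mul_one]
  have hisotropic :
      (A * θ + B)ᵀ * (C * θ + D) + (C * θ + D)ᵀ * (A * θ + B) = 0 := by
    rw [← transpose_fromRows_mul_fromBlocks_mul_fromRows, ← hgraph,
      transpose_mul_mul_mul_eq_of_transpose_mul_mul_eq hg,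
      transpose_fromRows_mul_fromBlocks_mul_fromRows, hθ]
    simp
  exact transpose_mul_nonsing_inv_eq_neg hisotropic hinv
end

section
/- Let g = [[A,B],[C,D]] ∈ SO(n,n|ℤ) and let θ be an n×n real skew-symmetric matrix with Cθ + D invertible. Suppose (Cθ + D)⁻¹C has block form [[F₁₁, 0],[0, 0]] with F₁₁ an invertible 2p×2p matrix. Then, writing C = [[C₁₁, C₁₂],[C₂₁, C₂₂]] and D = [[D₁₁, D₁₂],[D₂₁, D₂₂]] in (2p, n−2p) block form, one has C₁₂ = 0, C₂₂ = 0, and setting Z = θ₁₁ − F₁₁⁻¹ (with θ₁₁ the top-left 2p×2p block of θ), Z is skew-symmetric and D₁₁ = −C₁₁Z, D₂₁ = −C₂₁Z. -/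
open Matrix

lemma map_toBlocks12' {m n α β : Type*} (f : α → β) (M : Matrix (m ⊕ n) (m ⊕ n) α) :
    (M.map f).toBlocks₁₂ = M.toBlocks₁₂.map f := rfl
lemma map_toBlocks22' {m n α β : Type*} (f : α → β) (M : Matrix (m ⊕ n) (m ⊕ n) α) :
    (M.map f).toBlocks₂₂ = M.toBlocks₂₂.map f := rfl
lemma sub_toBlocks11' {m n α : Type*} [Sub α] (X Y : Matrix (m ⊕ n) (m ⊕ n) α) :
    (X - Y).toBlocks₁₁ = X.toBlocks₁₁ - Y.toBlocks₁₁ := rfl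
lemma sub_toBlocks21' {m n α : Type*} [Sub α] (X Y : Matrix (m ⊕ n) (m ⊕ n) α) :
    (X - Y).toBlocks₂₁ = X.toBlocks₂₁ - Y.toBlocks₂₁ := rfl

theorem stmt11 (p q : ℕ)
    (A B C D : Matrix (Fin (2 * p) ⊕ Fin q) (Fin (2 * p) ⊕ Fin q) ℤ)
    (hg : (Matrix.fromBlocks A B C D)ᵀ * Matrix.fromBlocks 0 1 1 0 * Matrix.fromBlocks A B C D
      = Matrix.fromBlocks 0 1 1 0)
    (hdet : (Matrix.fromBlocks A B C D).det = 1)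
    (θ : Matrix (Fin (2 * p) ⊕ Fin q) (Fin (2 * p) ⊕ Fin q) ℝ)
    (hθ : θᵀ = -θ)
    (hinv : IsUnit (C.map (Int.cast : ℤ → ℝ) * θ + D.map (Int.cast : ℤ → ℝ)))
    (F11 : Matrix (Fin (2 * p)) (Fin (2 * p)) ℝ)
    (hF : IsUnit F11)
    (hblock : (C.map (Int.cast : ℤ → ℝ) * θ + D.map (Int.cast : ℤ → ℝ))⁻¹ *
        C.map (Int.cast : ℤ → ℝ) = Matrix.fromBlocks F11 0 0 0) :
    C.toBlocks₁₂ = 0 ∧ C.toBlocks₂₂ = 0 ∧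
      (θ.toBlocks₁₁ - F11⁻¹)ᵀ = -(θ.toBlocks₁₁ - F11⁻¹) ∧
      (D.map (Int.cast : ℤ → ℝ)).toBlocks₁₁
        = -((C.map (Int.cast : ℤ → ℝ)).toBlocks₁₁ * (θ.toBlocks₁₁ - F11⁻¹)) ∧
      (D.map (Int.cast : ℤ → ℝ)).toBlocks₂₁
        = -((C.map (Int.cast : ℤ → ℝ)).toBlocks₂₁ * (θ.toBlocks₁₁ - F11⁻¹)) := by
  set g := Matrix.fromBlocks A B C D with hgdef
  set J := (Matrix.fromBlocks 0 1 1 0 :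
    Matrix ((Fin (2*p) ⊕ Fin q) ⊕ (Fin (2*p) ⊕ Fin q))
      ((Fin (2*p) ⊕ Fin q) ⊕ (Fin (2*p) ⊕ Fin q)) ℤ) with hJdef
  have hJJ : J * J = 1 := by
    simp [hJdef, Matrix.fromBlocks_multiply, ← Matrix.fromBlocks_one]
  have h1 : (J * gᵀ * J) * g = 1 := by
    have h : (J * gᵀ * J) * g = J * (gᵀ * J * g) := by noncomm_ring
    rw [h, hg, hJJ]
  have h2 : g * (J * gᵀ * J) = 1 := mul_eq_one_comm.mp h1
  have h3 : g * J * gᵀ = J := by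
    calc g * J * gᵀ = g * J * gᵀ * (J * J) := by rw [hJJ, Matrix.mul_one]
    _ = g * (J * gᵀ * J) * J := by noncomm_ring
    _ = J := by rw [h2, Matrix.one_mul]
  have hCD : C * Dᵀ + D * Cᵀ = 0 := by
    have h := congrArg Matrix.toBlocks₂₂ h3
    simp [hgdef, hJdef, Matrix.fromBlocks_transpose, Matrix.fromBlocks_multiply] at h
    linear_combination (norm := noncomm_ring) h
  set Cr := C.map (Int.cast : ℤ → ℝ) with hCr
  set Dr := D.map (Int.cast : ℤ → ℝ) with hDr
  have hCDr : Cr * Drᵀ + Dr * Crᵀ = 0 := by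
    have h : (Int.castRingHom ℝ).mapMatrix (C * Dᵀ + D * Cᵀ) = 0 := by rw [hCD]; simp
    rw [map_add, _root_.map_mul, _root_.map_mul] at h
    simpa [RingHom.mapMatrix_apply, Matrix.transpose_map, hCr, hDr] using h
  set M := Cr * θ + Dr with hM
  have hMdet : IsUnit M.det := (Matrix.isUnit_iff_isUnit_det M).mp hinv
  have hMM : M⁻¹ * M = 1 := Matrix.nonsing_inv_mul M hMdet
  have hMM' : M * M⁻¹ = 1 := Matrix.mul_nonsing_inv M hMdet
  have hskew0 : Cr * Mᵀ + M * Crᵀ = 0 := by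
    have h6 : Cr * Mᵀ + M * Crᵀ
        = Cr * θᵀ * Crᵀ + (Cr * Drᵀ + Dr * Crᵀ) + Cr * θ * Crᵀ := by
      rw [hM, Matrix.transpose_add, Matrix.transpose_mul]; noncomm_ring
    rw [h6, hθ, hCDr]; noncomm_ring
  set F := Matrix.fromBlocks F11 (0 : Matrix (Fin (2*p)) (Fin q) ℝ)
      (0 : Matrix (Fin q) (Fin (2*p)) ℝ) (0 : Matrix (Fin q) (Fin q) ℝ) with hFdef
  have hF' : M⁻¹ * Cr = F := hblock
  have hFskew : Fᵀ = -F := by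
    have h4 : Fᵀ = Crᵀ * (Mᵀ)⁻¹ := by
      rw [← hF', Matrix.transpose_mul, Matrix.transpose_nonsing_inv]
    have hMt : Mᵀ * (Mᵀ)⁻¹ = 1 := by
      rw [← Matrix.transpose_nonsing_inv, ← Matrix.transpose_mul, hMM, Matrix.transpose_one]
    have h5 : F + Fᵀ = M⁻¹ * (Cr * Mᵀ + M * Crᵀ) * (Mᵀ)⁻¹ := by
      rw [h4, ← hF']
      have hMt2 : M⁻¹ * Cr * Mᵀ * (Mᵀ)⁻¹ = M⁻¹ * Cr := by
        rw [Matrix.mul_assoc (M⁻¹ * Cr), hMt, Matrix.mul_one]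
      rw [Matrix.mul_add, Matrix.add_mul, ← Matrix.mul_assoc, ← Matrix.mul_assoc, hMt2, hMM,
        Matrix.one_mul]
    rw [hskew0] at h5
    simp only [Matrix.mul_zero, Matrix.zero_mul] at h5
    have h7 := eq_neg_of_add_eq_zero_right h5
    rw [h7]
  have hF11skew : F11ᵀ = -F11 := by
    have h := congrArg Matrix.toBlocks₁₁ hFskew
    simpa [hFdef, Matrix.fromBlocks_transpose, Matrix.fromBlocks_neg] using h
  have hF11det : IsUnit F11.det := (Matrix.isUnit_iff_isUnit_det F11).mp hF
  have hF11inv : (F11⁻¹)ᵀ = -(F11⁻¹) := by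
    have hneg : (-F11)⁻¹ = -(F11⁻¹) := by
      apply Matrix.inv_eq_right_inv
      rw [Matrix.neg_mul, Matrix.mul_neg, neg_neg, Matrix.mul_nonsing_inv F11 hF11det]
    rw [Matrix.transpose_nonsing_inv, hF11skew, hneg]
  have hCrF : Cr = M * F := by
    have h := congrArg (fun X => M * X) hF'
    simpa [← Matrix.mul_assoc, hMM'] using h
  have hCrblocks : Cr = Matrix.fromBlocks (M.toBlocks₁₁ * F11) 0 (M.toBlocks₂₁ * F11) 0 := by
    conv_lhs => rw [hCrF, ← Matrix.fromBlocks_toBlocks M, hFdef]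
    rw [Matrix.fromBlocks_multiply]
    simp
  have hC12r : Cr.toBlocks₁₂ = 0 := by
    have h := congrArg Matrix.toBlocks₁₂ hCrblocks; simpa using h
  have hC22r : Cr.toBlocks₂₂ = 0 := by
    have h := congrArg Matrix.toBlocks₂₂ hCrblocks; simpa using h
  have hC11r : Cr.toBlocks₁₁ = M.toBlocks₁₁ * F11 := by
    have h := congrArg Matrix.toBlocks₁₁ hCrblocks; simpa using h
  have hC21r : Cr.toBlocks₂₁ = M.toBlocks₂₁ * F11 := by
    have h := congrArg Matrix.toBlocks₂₁ hCrblocks; simpa using h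
  have hC12 : C.toBlocks₁₂ = 0 := by
    ext i j
    have h := congrFun (congrFun (hC12r.symm.trans (map_toBlocks12' _ C)) i) j
    simp only [Matrix.map_apply, Matrix.zero_apply] at h
    exact_mod_cast h.symm
  have hC22 : C.toBlocks₂₂ = 0 := by
    ext i j
    have h := congrFun (congrFun (hC22r.symm.trans (map_toBlocks22' _ C)) i) j
    simp only [Matrix.map_apply, Matrix.zero_apply] at h
    exact_mod_cast h.symm
  have hθ11 : (θ.toBlocks₁₁)ᵀ = -(θ.toBlocks₁₁) := by
    have h := congrArg Matrix.toBlocks₁₁ hθ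
    ext i j
    exact congrFun (congrFun h i) j
  have hZ : (θ.toBlocks₁₁ - F11⁻¹)ᵀ = -(θ.toBlocks₁₁ - F11⁻¹) := by
    rw [Matrix.transpose_sub, hθ11, hF11inv]; noncomm_ring
  have hDrM : Dr = M - Cr * θ := by rw [hM]; noncomm_ring
  have hCθ : Cr * θ = Matrix.fromBlocks (M.toBlocks₁₁ * F11 * θ.toBlocks₁₁)
      (M.toBlocks₁₁ * F11 * θ.toBlocks₁₂) (M.toBlocks₂₁ * F11 * θ.toBlocks₁₁)
      (M.toBlocks₂₁ * F11 * θ.toBlocks₁₂) := by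
    conv_lhs => rw [hCrblocks, ← Matrix.fromBlocks_toBlocks θ]
    rw [Matrix.fromBlocks_multiply]
    simp [Matrix.mul_assoc]
  have hD11 : Dr.toBlocks₁₁ = M.toBlocks₁₁ - M.toBlocks₁₁ * F11 * θ.toBlocks₁₁ := by
    rw [hDrM, sub_toBlocks11', hCθ]
    simp
  have hD21 : Dr.toBlocks₂₁ = M.toBlocks₂₁ - M.toBlocks₂₁ * F11 * θ.toBlocks₁₁ := by
    rw [hDrM, sub_toBlocks21', hCθ]
    simp
  refine ⟨hC12, hC22, hZ, ?_, ?_⟩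
  · rw [hD11, hC11r, Matrix.mul_sub, Matrix.mul_assoc M.toBlocks₁₁ F11 F11⁻¹,
      Matrix.mul_nonsing_inv F11 hF11det, Matrix.mul_one, neg_sub]
  · rw [hD21, hC21r, Matrix.mul_sub, Matrix.mul_assoc M.toBlocks₂₁ F11 F11⁻¹,
      Matrix.mul_nonsing_inv F11 hF11det, Matrix.mul_one, neg_sub]
end

section
/- Let g = [[A,B],[C,D]] ∈ SO(n,n|ℤ) satisfy: C = [[C₁₁, 0],[C₂₁, 0]] and D = [[−C₁₁Z, D₁₂],[−C₂₁Z, D₂₂]] in (2p, n−2p) block form, where Z is a 2p×2p skew-symmetric real matrix, and suppose there exists a skew-symmetric θ with Cθ + D invertible. Then Z is unique (determined by C and D) and all entries of Z are rational numbers. -/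
/-!
Let `Ĉ` be the first `2p` columns of `C`. Because the last `q` columns of `C` vanish and the
first `2p` columns of `D` equal `-Ĉ Z`, every `Cθ + D` is `Ĉ P + D₂ S` with `D₂` the last `q`
columns of `D`; invertibility of `Cθ + D` therefore forces `Ĉ` to have full column rank `2p`.
Then `Ĉ` is left-cancellable, which gives uniqueness of `Z`, and `ĈᵀĈ` is an invertible integer
matrix with `ĈᵀĈ Z = -ĈᵀD̂`, so `Z = -(ĈᵀĈ)⁻¹ĈᵀD̂` has rational entries.
-/

open Matrix

namespace Matrix

variable {m n k : Type*} [Fintype n]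

theorem rank_add_le {R : Type*} [Field R] (A B : Matrix m n R) :
    (A + B).rank ≤ A.rank + B.rank := by
  have hrange : LinearMap.range (A + B).mulVecLin ≤
      LinearMap.range A.mulVecLin ⊔ LinearMap.range B.mulVecLin := by
    rintro _ ⟨v, rfl⟩
    exact Submodule.mem_sup.2 ⟨A *ᵥ v, ⟨v, rfl⟩, B *ᵥ v, ⟨v, rfl⟩, (add_mulVec A B v).symm⟩
  exact (Submodule.finrank_mono hrange).trans (Submodule.finrank_add_le_finrank_add_finrank _ _)

theorem ker_mulVecLin_eq_bot_of_rank_eq_card {R : Type*} [Field R] {A : Matrix m n R}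
    (hA : A.rank = Fintype.card n) : LinearMap.ker A.mulVecLin = ⊥ := by
  have h := LinearMap.finrank_range_add_finrank_ker A.mulVecLin
  rw [Module.finrank_fintype_fun_eq_card] at h
  exact Submodule.finrank_eq_zero.mp (by rw [rank] at hA; omega)

theorem toCols₁_eq_neg_mul_of_toBlocks {m₁ m₂ n₁ n₂ R : Type*} [Fintype n₁] [Ring R]
    {C D : Matrix (m₁ ⊕ m₂) (n₁ ⊕ n₂) R} {Z : Matrix n₁ n₁ R}
    (h₁ : D.toBlocks₁₁ = -(C.toBlocks₁₁ * Z)) (h₂ : D.toBlocks₂₁ = -(C.toBlocks₂₁ * Z)) :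
    D.toCols₁ = -(C.toCols₁ * Z) := by
  ext (i | i) j
  · exact congrFun (congrFun h₁ i) j
  · exact congrFun (congrFun h₂ i) j

theorem mul_add_eq_toCols₁_mul_add_toCols₂_mul {n₁ n₂ R : Type*} [Fintype n₁] [Fintype n₂]
    [DecidableEq n₂] [Ring R] {C D : Matrix m (n₁ ⊕ n₂) R} {Z : Matrix n₁ n₁ R}
    (hC : C.toCols₂ = 0) (hD : D.toCols₁ = -(C.toCols₁ * Z)) (θ : Matrix (n₁ ⊕ n₂) (n₁ ⊕ n₂) R) :
    C * θ + D =
      C.toCols₁ * (θ.toRows₁ - fromCols Z 0) + D.toCols₂ * fromCols 0 (1 : Matrix n₂ n₂ R) := by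
  rw [← fromCols_toCols C, ← fromRows_toRows θ, fromCols_mul_fromRows, hC, Matrix.zero_mul,
    add_zero, ← fromCols_toCols D, hD]
  ext i (j | j) <;> simp [mul_apply, mul_add, Finset.sum_add_distrib, sub_eq_add_neg]

theorem rank_toCols₁_of_isUnit_mul_add {n₁ n₂ R : Type*} [Fintype n₁] [Fintype n₂]
    [DecidableEq n₁] [DecidableEq n₂] [Field R] {C D : Matrix (n₁ ⊕ n₂) (n₁ ⊕ n₂) R}
    {Z : Matrix n₁ n₁ R} (hC : C.toCols₂ = 0) (hD : D.toCols₁ = -(C.toCols₁ * Z))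
    {θ : Matrix (n₁ ⊕ n₂) (n₁ ⊕ n₂) R} (hθ : IsUnit (C * θ + D)) :
    C.toCols₁.rank = Fintype.card n₁ := by
  have hle : Fintype.card n₁ + Fintype.card n₂ ≤ C.toCols₁.rank + Fintype.card n₂ :=
    calc Fintype.card n₁ + Fintype.card n₂ = (C * θ + D).rank := by
          rw [rank_of_isUnit _ hθ, Fintype.card_sum]
      _ ≤ (C.toCols₁ * _).rank + (D.toCols₂ * _).rank := by
          rw [mul_add_eq_toCols₁_mul_add_toCols₂_mul hC hD]
          exact rank_add_le _ _
      _ ≤ C.toCols₁.rank + Fintype.card n₂ :=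
          add_le_add (rank_mul_le_left _ _) ((rank_mul_le_left _ _).trans (rank_le_card_width _))
  exact le_antisymm (rank_le_card_width _) (by omega)

section LinearOrderedField

variable [Fintype m] {R : Type*} [Field R] [LinearOrder R] [IsStrictOrderedRing R] [DecidableEq n]

theorem isUnit_det_transpose_mul_self_of_rank_eq_card {A : Matrix m n R}
    (hA : A.rank = Fintype.card n) : IsUnit (Aᵀ * A).det := by
  rw [← isUnit_iff_isUnit_det, ← mulVec_injective_iff_isUnit, ← coe_mulVecLin,
    ← LinearMap.ker_eq_bot, ker_mulVecLin_transpose_mul_self]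
  exact ker_mulVecLin_eq_bot_of_rank_eq_card hA

theorem mul_left_cancel_of_rank_eq_card {A : Matrix m n R} (hA : A.rank = Fintype.card n)
    {X Y : Matrix n k R} (h : A * X = A * Y) : X = Y := by
  have hG := isUnit_det_transpose_mul_self_of_rank_eq_card hA
  rw [← nonsing_inv_mul_cancel_left _ X hG, ← nonsing_inv_mul_cancel_left _ Y hG,
    Matrix.mul_assoc, Matrix.mul_assoc, h]

theorem exists_map_eq_of_mul_eq {K : Type*} [Field K] (f : K →+* R) {A : Matrix m n K}
    (hA : (A.map f).rank = Fintype.card n) (B : Matrix m k K) {X : Matrix n k R}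
    (hX : A.map f * X = B.map f) : ∃ Y : Matrix n k K, Y.map f = X := by
  have hGf : (Aᵀ * A).map f = (A.map f)ᵀ * A.map f := by rw [Matrix.map_mul, transpose_map]
  have hG : IsUnit (Aᵀ * A).det := by
    rw [← isUnit_map_iff f, RingHom.map_det, RingHom.mapMatrix_apply, hGf]
    exact isUnit_det_transpose_mul_self_of_rank_eq_card hA
  refine ⟨(Aᵀ * A)⁻¹ * (Aᵀ * B), mul_left_cancel_of_rank_eq_card
    (A := (A.map f)ᵀ * A.map f) (by rw [rank_transpose_mul_self, hA]) ?_⟩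
  rw [← hGf, ← Matrix.map_mul, mul_nonsing_inv_cancel_left _ _ hG, Matrix.map_mul, transpose_map,
    ← hX, hGf, Matrix.mul_assoc]

end LinearOrderedField

end Matrix

theorem stmt12_general (p q : ℕ)
    (C D : Matrix (Fin (2 * p) ⊕ Fin q) (Fin (2 * p) ⊕ Fin q) ℤ)
    (hC12 : C.toBlocks₁₂ = 0) (hC22 : C.toBlocks₂₂ = 0)
    (Z : Matrix (Fin (2 * p)) (Fin (2 * p)) ℝ)
    (hD11 : (D.map (Int.cast : ℤ → ℝ)).toBlocks₁₁
      = -((C.map (Int.cast : ℤ → ℝ)).toBlocks₁₁ * Z))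
    (hD21 : (D.map (Int.cast : ℤ → ℝ)).toBlocks₂₁
      = -((C.map (Int.cast : ℤ → ℝ)).toBlocks₂₁ * Z))
    (hex : ∃ θ : Matrix (Fin (2 * p) ⊕ Fin q) (Fin (2 * p) ⊕ Fin q) ℝ, θᵀ = -θ ∧
      IsUnit (C.map (Int.cast : ℤ → ℝ) * θ + D.map (Int.cast : ℤ → ℝ))) :
    (∀ Z' : Matrix (Fin (2 * p)) (Fin (2 * p)) ℝ, Z'ᵀ = -Z' →
      (D.map (Int.cast : ℤ → ℝ)).toBlocks₁₁
          = -((C.map (Int.cast : ℤ → ℝ)).toBlocks₁₁ * Z') →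
      (D.map (Int.cast : ℤ → ℝ)).toBlocks₂₁
          = -((C.map (Int.cast : ℤ → ℝ)).toBlocks₂₁ * Z') →
      Z' = Z) ∧
    ∀ i j, ∃ r : ℚ, Z i j = (r : ℝ) := by
  obtain ⟨θ, -, hθ⟩ := hex
  set Cr := C.map (Int.cast : ℤ → ℝ)
  have hC : Cr.toCols₂ = 0 := by
    ext (i | i) j
    · simpa [Cr, toBlocks₁₂] using congrFun (congrFun hC12 i) j
    · simpa [Cr, toBlocks₂₂] using congrFun (congrFun hC22 i) j
  have hD := toCols₁_eq_neg_mul_of_toBlocks hD11 hD21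
  have hrank := rank_toCols₁_of_isUnit_mul_add hC hD hθ
  have hCq : (C.toCols₁.map (Int.cast : ℤ → ℚ)).map (Rat.castHom ℝ) = Cr.toCols₁ := by
    ext; simp [Cr]
  refine ⟨fun Z' _ hD11' hD21' => mul_left_cancel_of_rank_eq_card hrank <| neg_injective ?_, ?_⟩
  · rw [← hD, toCols₁_eq_neg_mul_of_toBlocks hD11' hD21']
  · obtain ⟨Y, hY⟩ := exists_map_eq_of_mul_eq (Rat.castHom ℝ) (hCq ▸ hrank)
      (-(D.toCols₁.map (Int.cast : ℤ → ℚ))) (X := Z) <| by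
        rw [hCq, ← neg_neg (Cr.toCols₁ * Z), ← hD]
        ext; simp
    exact fun i j => ⟨Y i j, by rw [← hY]; rfl⟩

theorem stmt12 (p q : ℕ)
    (A B C D : Matrix (Fin (2 * p) ⊕ Fin q) (Fin (2 * p) ⊕ Fin q) ℤ)
    (hg : (Matrix.fromBlocks A B C D)ᵀ * Matrix.fromBlocks 0 1 1 0 * Matrix.fromBlocks A B C D
      = Matrix.fromBlocks 0 1 1 0)
    (hdet : (Matrix.fromBlocks A B C D).det = 1)
    (hC12 : C.toBlocks₁₂ = 0) (hC22 : C.toBlocks₂₂ = 0)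
    (Z : Matrix (Fin (2 * p)) (Fin (2 * p)) ℝ) (hZ : Zᵀ = -Z)
    (hD11 : (D.map (Int.cast : ℤ → ℝ)).toBlocks₁₁
      = -((C.map (Int.cast : ℤ → ℝ)).toBlocks₁₁ * Z))
    (hD21 : (D.map (Int.cast : ℤ → ℝ)).toBlocks₂₁
      = -((C.map (Int.cast : ℤ → ℝ)).toBlocks₂₁ * Z))
    (hex : ∃ θ : Matrix (Fin (2 * p) ⊕ Fin q) (Fin (2 * p) ⊕ Fin q) ℝ, θᵀ = -θ ∧
      IsUnit (C.map (Int.cast : ℤ → ℝ) * θ + D.map (Int.cast : ℤ → ℝ))) :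
    (∀ Z' : Matrix (Fin (2 * p)) (Fin (2 * p)) ℝ, Z'ᵀ = -Z' →
      (D.map (Int.cast : ℤ → ℝ)).toBlocks₁₁
          = -((C.map (Int.cast : ℤ → ℝ)).toBlocks₁₁ * Z') →
      (D.map (Int.cast : ℤ → ℝ)).toBlocks₂₁
          = -((C.map (Int.cast : ℤ → ℝ)).toBlocks₂₁ * Z') →
      Z' = Z) ∧
    ∀ i j, ∃ r : ℚ, Z i j = (r : ℝ) :=
  stmt12_general p q C D hC12 hC22 Z hD11 hD21 hex
end
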